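/- arXiv:2504.18570 — 4 statements merged into one kernel-verified Lean document; each statement's English description precedes it below -/
import Mathlib

section
/- Let n be a positive integer, let x, z ∈ ℝⁿ with y := x − z ≠ 0, and let c ∈ ℝⁿ be such that d := c − (⟨c, y⟩/‖y‖²)·y ≠ 0 (i.e., c is not a scalar multiple of y). Define b := (‖y‖/‖d‖)·d and a := y + b. Then a satisfies the Residual Evasion Criterion ⟨a, a − 2y⟩ = 0, and hence ‖x − (z + a)‖ = ‖x − z‖. -/
/-!
Writing `a = (a - y) + y` and `a - 2y = (a - y) - y`, the criterion `⟪a, a - 2y⟫ = 0` says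
`‖a - y‖ = ‖y‖`, i.e. `‖x - (z + a)‖ = ‖x - z‖`. For the attack, `a - y = b` is `d` rescaled
to length `‖y‖`.
-/

open scoped RealInnerProductSpace

section ResidualEvasion

variable {E : Type*} [NormedAddCommGroup E] [InnerProductSpace ℝ E]

def ResidualEvasive (a y : E) : Prop :=
  ⟪a, a - (2 : ℝ) • y⟫ = 0

theorem residualEvasive_iff_norm_sub_eq {a y : E} :
    ResidualEvasive a y ↔ ‖a - y‖ = ‖y‖ := by
  have hsplit : ⟪a, a - (2 : ℝ) • y⟫ = ⟪(a - y) + y, (a - y) - y⟫ := by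
    congr 1 <;> module
  rw [ResidualEvasive, hsplit, real_inner_add_sub_eq_zero_iff]

theorem ResidualEvasive.norm_sub_add_eq {x z a : E} (h : ResidualEvasive a (x - z)) :
    ‖x - (z + a)‖ = ‖x - z‖ := by
  rw [← residualEvasive_iff_norm_sub_eq.1 h, ← norm_neg]
  congr 1
  abel

theorem norm_div_norm_smul {r : ℝ} (hr : 0 ≤ r) {d : E} (hd : d ≠ 0) :
    ‖(r / ‖d‖) • d‖ = r := by
  rw [norm_smul, Real.norm_eq_abs, abs_div, abs_norm, abs_of_nonneg hr,
    div_mul_cancel₀ r (norm_ne_zero_iff.2 hd)]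

theorem residualEvasive_add_div_norm_smul (y : E) {d : E} (hd : d ≠ 0) :
    ResidualEvasive (y + (‖y‖ / ‖d‖) • d) y := by
  rw [residualEvasive_iff_norm_sub_eq, add_sub_cancel_left, norm_div_norm_smul (norm_nonneg y) hd]

end ResidualEvasion

theorem gram_schmidt_attack_is_residual_evasive_general (n : ℕ)
    (x z : EuclideanSpace ℝ (Fin n))
    (y : EuclideanSpace ℝ (Fin n)) (hy : y = x - z)
    (d : EuclideanSpace ℝ (Fin n)) (hd0 : d ≠ 0)
    (b : EuclideanSpace ℝ (Fin n)) (hb : b = (‖y‖ / ‖d‖) • d)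
    (a : EuclideanSpace ℝ (Fin n)) (ha : a = y + b) :
    ⟪a, a - (2 : ℝ) • y⟫ = 0 ∧ ‖x - (z + a)‖ = ‖x - z‖ := by
  have hevasive : ResidualEvasive a y := by
    rw [ha, hb]
    exact residualEvasive_add_div_norm_smul y hd0
  subst hy
  exact ⟨hevasive, hevasive.norm_sub_add_eq⟩

/-- Construction of a random undetectable attack vector (Proposition: λ = 1).
With `y = x − z ≠ 0` and `d` the Gram–Schmidt orthogonal component of `c` with respect
to `y` assumed nonzero, the vector `a = y + (‖y‖/‖d‖)·d` satisfies the Residual Evasion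
Criterion, hence leaves the primary residual unchanged. -/
theorem gram_schmidt_attack_is_residual_evasive (n : ℕ) (hn : 0 < n)
    (x z c : EuclideanSpace ℝ (Fin n))
    (y : EuclideanSpace ℝ (Fin n)) (hy : y = x - z) (hy0 : y ≠ 0)
    (d : EuclideanSpace ℝ (Fin n)) (hd : d = c - (⟪c, y⟫ / ‖y‖ ^ 2) • y) (hd0 : d ≠ 0)
    (b : EuclideanSpace ℝ (Fin n)) (hb : b = (‖y‖ / ‖d‖) • d)
    (a : EuclideanSpace ℝ (Fin n)) (ha : a = y + b) :
    ⟪a, a - (2 : ℝ) • y⟫ = 0 ∧ ‖x - (z + a)‖ = ‖x - z‖ :=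
  gram_schmidt_attack_is_residual_evasive_general n x z y hy d hd0 b hb a ha
end

section
/- Let n be a positive integer, let d ∈ ℝⁿ, and let A be the real n × n matrix with A_{ij} = d_i if i = j and A_{ij} = 1 if i ≠ j. There exists x ∈ ℝⁿ with A·x = 0, x ≥ 0 (componentwise), and x ≠ 0 if and only if d_j < 1 for every j and Σ_{i=1}^{n} 1/(1 − d_i) = 1. -/
/-!
Since `A` is `diag (d - 1)` plus the all-ones matrix, `A x = 0` says `(1 - dᵢ) xᵢ = ∑ⱼ xⱼ` for
every `i`. For nonnegative `x ≠ 0` the right side is positive, which forces `dᵢ < 1` and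
`xᵢ / ∑ⱼ xⱼ = 1 / (1 - dᵢ)`; summing over `i` gives the condition. Conversely
`xᵢ = 1 / (1 - dᵢ)` is then a kernel vector.
-/

open Finset Matrix

variable {ι : Type*} [Fintype ι]

lemma mulVec_apply_of_diag_offDiag_one [DecidableEq ι] {R : Type*} [CommRing R] {d : ι → R}
    {A : Matrix ι ι R} (hA : ∀ i j, A i j = if i = j then d i else 1) (x : ι → R) (i : ι) :
    (A *ᵥ x) i = (d i - 1) * x i + ∑ j, x j := by
  have hA' : A = diagonal (fun i => d i - 1) + of fun _ _ => 1 := by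
    ext i j
    by_cases h : i = j <;> simp [hA, h]
  rw [hA', add_mulVec, Pi.add_apply, mulVec_diagonal]
  simp [mulVec, dotProduct]

lemma mulVec_eq_zero_iff_of_diag_offDiag_one [DecidableEq ι] {R : Type*} [CommRing R]
    {d : ι → R} {A : Matrix ι ι R} (hA : ∀ i j, A i j = if i = j then d i else 1) (x : ι → R) :
    A *ᵥ x = 0 ↔ ∀ i, (1 - d i) * x i = ∑ j, x j := by
  simp only [funext_iff, Pi.zero_apply, mulVec_apply_of_diag_offDiag_one hA]
  refine forall_congr' fun i => ⟨fun h => ?_, fun h => ?_⟩ <;> linear_combination -h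

lemma sum_pos_of_nonneg_of_ne_zero {x : ι → ℝ} (hx : ∀ i, 0 ≤ x i) (hx0 : x ≠ 0) :
    0 < ∑ i, x i := by
  obtain ⟨k, hk⟩ := Function.ne_iff.mp hx0
  exact sum_pos' (fun i _ => hx i) ⟨k, mem_univ k, (hx k).lt_of_ne' hk⟩

lemma lt_one_and_sum_one_div_eq_one_of_mul_eq_sum {d x : ι → ℝ} (hx : ∀ i, 0 ≤ x i)
    (hx0 : x ≠ 0) (h : ∀ i, (1 - d i) * x i = ∑ j, x j) :
    (∀ i, d i < 1) ∧ ∑ i, 1 / (1 - d i) = 1 := by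
  have hS := sum_pos_of_nonneg_of_ne_zero hx hx0
  have hd : ∀ i, 0 < 1 - d i := fun i =>
    pos_of_mul_pos_left ((h i).symm ▸ hS) (hx i)
  refine ⟨fun i => by linarith [hd i], ?_⟩
  calc ∑ i, 1 / (1 - d i) = ∑ i, x i / ∑ j, x j := by
        refine sum_congr rfl fun i _ => ?_
        rw [eq_div_iff hS.ne', ← h i, one_div, inv_mul_cancel_left₀ (hd i).ne']
    _ = 1 := by rw [← sum_div, div_self hS.ne']

lemma mul_one_div_eq_sum_of_sum_one_div_eq_one {d : ι → ℝ} (hd : ∀ i, d i < 1)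
    (hsum : ∑ i, 1 / (1 - d i) = 1) (i : ι) :
    (1 - d i) * (1 / (1 - d i)) = ∑ j, 1 / (1 - d j) := by
  rw [hsum, mul_one_div_cancel (sub_ne_zero.mpr (hd i).ne')]

theorem special_matrix_nonneg_kernel_iff_general (n : ℕ) (d : Fin n → ℝ)
    (A : Matrix (Fin n) (Fin n) ℝ)
    (hA : ∀ i j, A i j = if i = j then d i else 1) :
    (∃ x : Fin n → ℝ, A.mulVec x = 0 ∧ (∀ i, 0 ≤ x i) ∧ x ≠ 0) ↔
      ((∀ j, d j < 1) ∧ ∑ i, 1 / (1 - d i) = 1) := by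
  simp_rw [mulVec_eq_zero_iff_of_diag_offDiag_one hA]
  constructor
  · rintro ⟨x, hker, hx, hx0⟩
    exact lt_one_and_sum_one_div_eq_one_of_mul_eq_sum hx hx0 hker
  · rintro ⟨hd, hsum⟩
    refine ⟨fun i => 1 / (1 - d i), mul_one_div_eq_sum_of_sum_one_div_eq_one hd hsum,
      fun i => one_div_nonneg.mpr (sub_nonneg.mpr (hd i).le),
      ne_of_apply_ne (fun x => ∑ i, x i) ?_⟩
    simp only [hsum, Pi.zero_apply, sum_const_zero, ne_eq, one_ne_zero, not_false_eq_true]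

/-- Lemma: for the matrix `A` with diagonal entries `d i` and off-diagonal entries `1`,
the system `Ax = 0, x ≥ 0, x ≠ 0` is feasible iff `d j < 1` for every `j` and
`∑ i, 1/(1 − d i) = 1`. -/
theorem special_matrix_nonneg_kernel_iff (n : ℕ) (hn : 0 < n) (d : Fin n → ℝ)
    (A : Matrix (Fin n) (Fin n) ℝ)
    (hA : ∀ i j, A i j = if i = j then d i else 1) :
    (∃ x : Fin n → ℝ, A.mulVec x = 0 ∧ (∀ i, 0 ≤ x i) ∧ x ≠ 0) ↔
      ((∀ j, d j < 1) ∧ ∑ i, 1 / (1 - d i) = 1) :=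
  special_matrix_nonneg_kernel_iff_general n d A hA
end

section
/- Let n be a positive integer and let a, y ∈ ℝⁿ with y ≠ 0 and a_j ≠ y_j for every j. Suppose there exist signs ε_j ∈ {−1, +1} such that the vector c ∈ ℝⁿ defined by c_j := ε_j·(a_j − y_j)/‖y‖ satisfies ⟨c, y⟩ = 0. Then the vector a′ := y + (‖y‖/‖c‖)·c satisfies the Residual Evasion Criterion ⟨a′, a′ − 2y⟩ = 0; in particular, with y = x − z, the attack z_a = z + a′ leaves the primary residual unchanged: ‖x − (z + a′)‖ = ‖x − z‖. -/
/-!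
Since `⟪a', a' - 2y⟫ = ‖a' - y‖² - ‖y‖²`, the criterion says exactly that `a'` lies on the sphere
of radius `‖y‖` about `y`; so does `‖x - (z + a')‖ = ‖y - a'‖ = ‖x - z‖`. The rescaled vector
`(‖y‖ / ‖c‖) • c` has length `‖y‖` once `c ≠ 0`, and no coordinate of `c` vanishes because the
signs are nonzero and `a j ≠ y j`.
-/

open scoped RealInnerProductSpace

theorem real_inner_sub_two_smul_eq {E : Type*} [NormedAddCommGroup E] [InnerProductSpace ℝ E]
    (a y : E) : ⟪a, a - (2 : ℝ) • y⟫ = ‖a - y‖ ^ 2 - ‖y‖ ^ 2 := by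
  rw [inner_sub_right, real_inner_smul_right, real_inner_self_eq_norm_sq, norm_sub_sq_real]
  ring

theorem norm_div_norm_smul_s14 {E F : Type*} [SeminormedAddCommGroup E] [NormedSpace ℝ E]
    [SeminormedAddCommGroup F] (y : F) {c : E} (hc : ‖c‖ ≠ 0) : ‖(‖y‖ / ‖c‖) • c‖ = ‖y‖ := by
  rw [norm_smul, Real.norm_of_nonneg (by positivity), div_mul_cancel₀ _ hc]

theorem sign_mul_sub_div_ne_zero {ε a b r : ℝ} (hε : ε = 1 ∨ ε = -1) (hab : a ≠ b) (hr : r ≠ 0) :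
    ε * (a - b) / r ≠ 0 := by
  have hε0 : ε ≠ 0 := by rcases hε with rfl | rfl <;> norm_num
  exact div_ne_zero (mul_ne_zero hε0 (sub_ne_zero.mpr hab)) hr

theorem EuclideanSpace.exists_apply_ne_zero {ι : Type*} {y : EuclideanSpace ℝ ι} (hy : y ≠ 0) :
    ∃ j, y j ≠ 0 := by
  by_contra! h
  exact hy (PiLp.ext h)

theorem sign_choice_attack_evasive_general (n : ℕ)
    (a y : EuclideanSpace ℝ (Fin n)) (hy0 : y ≠ 0) (hne : ∀ j, a j ≠ y j)
    (ε : Fin n → ℝ) (hε : ∀ j, ε j = 1 ∨ ε j = -1)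
    (c : EuclideanSpace ℝ (Fin n)) (hc : ∀ j, c j = ε j * (a j - y j) / ‖y‖)
    (a' : EuclideanSpace ℝ (Fin n)) (ha' : a' = y + (‖y‖ / ‖c‖) • c) :
    ⟪a', a' - (2 : ℝ) • y⟫ = 0 ∧
      ∀ x z : EuclideanSpace ℝ (Fin n), y = x - z → ‖x - (z + a')‖ = ‖x - z‖ := by
  obtain ⟨j, -⟩ := EuclideanSpace.exists_apply_ne_zero hy0
  have hcj : c j ≠ 0 := by
    rw [hc j]
    exact sign_mul_sub_div_ne_zero (hε j) (hne j) (norm_ne_zero_iff.mpr hy0)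
  have hc0 : c ≠ 0 := fun h => hcj (by rw [h]; rfl)
  have on_sphere : ‖a' - y‖ = ‖y‖ := by
    rw [ha', add_sub_cancel_left, norm_div_norm_smul_s14 y (norm_ne_zero_iff.mpr hc0)]
  refine ⟨by rw [real_inner_sub_two_smul_eq, on_sphere, sub_self], fun x z hxz => ?_⟩
  have residual : x - (z + a') = -(a' - y) := by rw [hxz]; abel
  rw [residual, norm_neg, on_sphere, hxz]

/-- Theorem (sign choice): if for some choice of signs `ε j ∈ {−1, +1}` the vector
`c` with `c j = ε j · (a j − y j)/‖y‖` is orthogonal to `y`, then the attack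
`a′ = y + (‖y‖/‖c‖)·c` satisfies the Residual Evasion Criterion; in particular, with
`y = x − z`, the attack `z + a′` leaves the primary residual unchanged. -/
theorem sign_choice_attack_evasive (n : ℕ) (hn : 0 < n)
    (a y : EuclideanSpace ℝ (Fin n)) (hy0 : y ≠ 0) (hne : ∀ j, a j ≠ y j)
    (ε : Fin n → ℝ) (hε : ∀ j, ε j = 1 ∨ ε j = -1)
    (c : EuclideanSpace ℝ (Fin n)) (hc : ∀ j, c j = ε j * (a j - y j) / ‖y‖)
    (hortho : ⟪c, y⟫ = 0)
    (a' : EuclideanSpace ℝ (Fin n)) (ha' : a' = y + (‖y‖ / ‖c‖) • c) :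
    ⟪a', a' - (2 : ℝ) • y⟫ = 0 ∧
      ∀ x z : EuclideanSpace ℝ (Fin n), y = x - z → ‖x - (z + a')‖ = ‖x - z‖ :=
  sign_choice_attack_evasive_general n a y hy0 hne ε hε c hc a' ha'
end

section
/- Let n be a positive integer and let y, c ∈ ℝⁿ with y ≠ 0, c ≠ 0, c_i ≠ 0 for every i, and ⟨c, y⟩ = 0. Define a := y + (‖y‖/‖c‖)·c, d_i := 1 − ‖y‖²/(a_i − y_i)², and let A be the real n × n matrix with A_{ij} = d_i if i = j and A_{ij} = 1 if i ≠ j. Then the componentwise-square vector c² := (c_1², …, c_n²) satisfies A·(c²) = 0, and a satisfies the Residual Evasion Criterion ⟨a, a − 2y⟩ = 0. -/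
open scoped RealInnerProductSpace

/-!
The criterion `⟪a, a - 2y⟫ = 0` says exactly that `‖a - y‖ = ‖y‖`, and `a - y` is `c` rescaled
to length `‖y‖`. Since `a i - y i = (‖y‖ / ‖c‖) c i`, the coefficients simplify to
`d i = 1 - ‖c‖² / c i²`, so row `i` of `A (c²)` is `∑ j, c j² + (d i - 1) c i² = ‖c‖² - ‖c‖² = 0`.
-/

theorem real_inner_self_sub_two_smul_eq_zero_iff {F : Type*} [NormedAddCommGroup F]
    [InnerProductSpace ℝ F] (a y : F) : ⟪a, a - (2 : ℝ) • y⟫ = 0 ↔ ‖a - y‖ = ‖y‖ := by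
  have hsum : a = (a - y) + y := (sub_add_cancel a y).symm
  have hdiff : a - (2 : ℝ) • y = (a - y) - y := by rw [two_smul, sub_add_eq_sub_sub]
  rw [hdiff, hsum, add_sub_cancel_right]
  exact real_inner_add_sub_eq_zero_iff _ _

theorem norm_div_norm_smul_self {E : Type*} [SeminormedAddCommGroup E] [NormedSpace ℝ E]
    {c : E} (hc : ‖c‖ ≠ 0) (r : ℝ) : ‖(r / ‖c‖) • c‖ = |r| := by
  rw [norm_smul, norm_div, norm_norm, Real.norm_eq_abs, div_mul_cancel₀ _ hc]

section OnesOffDiagonal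

variable {ι : Type*} [Fintype ι] [DecidableEq ι] {A : Matrix ι ι ℝ} {d v : ι → ℝ}

theorem mulVec_apply_of_ones_off_diagonal (hA : ∀ i j, A i j = if i = j then d i else 1)
    (v : ι → ℝ) (i : ι) : A.mulVec v i = ∑ j, v j + (d i - 1) * v i := by
  have hrow : ∀ j, A i j * v j = v j + if i = j then (d i - 1) * v j else 0 := by
    intro j
    rw [hA]
    split_ifs <;> ring
  simp only [Matrix.mulVec, dotProduct, hrow, Finset.sum_add_distrib, Finset.sum_ite_eq,
    Finset.mem_univ, if_true]

theorem mulVec_eq_zero_of_ones_off_diagonal (hA : ∀ i j, A i j = if i = j then d i else 1)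
    (hv : ∀ i, v i ≠ 0) (hd : ∀ i, d i = 1 - (∑ j, v j) / v i) : A.mulVec v = 0 := by
  funext i
  rw [mulVec_apply_of_ones_off_diagonal hA, hd, Pi.zero_apply, sub_sub_cancel_left, neg_mul,
    div_mul_cancel₀ _ (hv i), add_neg_cancel]

end OnesOffDiagonal

theorem system_for_c_and_evasive_general (n : ℕ)
    (y c : EuclideanSpace ℝ (Fin n)) (hy0 : y ≠ 0) (hc0 : c ≠ 0)
    (hci : ∀ i, c i ≠ 0)
    (a : EuclideanSpace ℝ (Fin n)) (ha : a = y + (‖y‖ / ‖c‖) • c)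
    (d : Fin n → ℝ) (hd : ∀ i, d i = 1 - ‖y‖ ^ 2 / (a i - y i) ^ 2)
    (A : Matrix (Fin n) (Fin n) ℝ)
    (hA : ∀ i j, A i j = if i = j then d i else 1) :
    A.mulVec (fun i => (c i) ^ 2) = 0 ∧ ⟪a, a - (2 : ℝ) • y⟫ = 0 := by
  have hyn : ‖y‖ ≠ 0 := norm_ne_zero_iff.mpr hy0
  have hcn : ‖c‖ ≠ 0 := norm_ne_zero_iff.mpr hc0
  have hay : a - y = (‖y‖ / ‖c‖) • c := by rw [ha, add_sub_cancel_left]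
  refine ⟨mulVec_eq_zero_of_ones_off_diagonal hA (fun i => pow_ne_zero 2 (hci i)) fun i => ?_, ?_⟩
  · have hdiff : a i - y i = ‖y‖ / ‖c‖ * c i := by
      rw [← PiLp.sub_apply, hay, PiLp.smul_apply, smul_eq_mul]
    rw [hd, hdiff, ← EuclideanSpace.real_norm_sq_eq]
    field_simp
  · rw [real_inner_self_sub_two_smul_eq_zero_iff, hay, norm_div_norm_smul_self hcn, abs_norm]

/-- Theorem (system for `c`): for `y ≠ 0`, `c ≠ 0` with all components nonzero and
`c ⊥ y`, the attack `a = y + (‖y‖/‖c‖)·c` yields coefficients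
`d i = 1 − ‖y‖²/(a i − y i)²` such that the componentwise square of `c` lies in the
kernel of the matrix with diagonal `d` and off-diagonal entries `1`, and `a` satisfies
the Residual Evasion Criterion. -/
theorem system_for_c_and_evasive (n : ℕ) (hn : 0 < n)
    (y c : EuclideanSpace ℝ (Fin n)) (hy0 : y ≠ 0) (hc0 : c ≠ 0)
    (hci : ∀ i, c i ≠ 0) (hortho : ⟪c, y⟫ = 0)
    (a : EuclideanSpace ℝ (Fin n)) (ha : a = y + (‖y‖ / ‖c‖) • c)
    (d : Fin n → ℝ) (hd : ∀ i, d i = 1 - ‖y‖ ^ 2 / (a i - y i) ^ 2)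
    (A : Matrix (Fin n) (Fin n) ℝ)
    (hA : ∀ i j, A i j = if i = j then d i else 1) :
    A.mulVec (fun i => (c i) ^ 2) = 0 ∧ ⟪a, a - (2 : ℝ) • y⟫ = 0 :=
  system_for_c_and_evasive_general n y c hy0 hc0 hci a ha d hd A hA
end
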